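/- Let C be an extremal set in a finite simple connected graph Γ with antipodal set D, and let μ_l be a C-local eigenvalue. Then ⟨z_C(μ_l), z_D(μ_l)⟩ = (−1)^l·(π₀(C)/π_l(C))·(‖ρC‖·‖ρD‖/‖ν‖²), where z_C(μ_l) and z_D(μ_l) are the projections of e_C and e_D onto the μ_l-eigenspace. In particular this inner product is nonzero and its sign is (−1)^l. -/

import Mathlib

open Finset Polynomial BigOperators
open scoped Classical

noncomputable section

/-- The eigenspace of a real matrix `A` (viewed as an operator on Euclidean space)
for the value `μ`. -/
def eigSp {n : ℕ} (A : Matrix (Fin n) (Fin n) ℝ) (μ : ℝ) :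
    Submodule ℝ (EuclideanSpace ℝ (Fin n)) :=
  Module.End.eigenspace (Matrix.toEuclideanLin A) μ

/-- Orthogonal projection onto the `μ`-eigenspace of `A`. -/
def eigProj {n : ℕ} (A : Matrix (Fin n) (Fin n) ℝ) (μ : ℝ) (v : EuclideanSpace ℝ (Fin n)) :
    EuclideanSpace ℝ (Fin n) :=
  (Submodule.orthogonalProjection (eigSp A μ) v : EuclideanSpace ℝ (Fin n))

/-- The weighted characteristic vector `ρS = Σ_{i∈S} ν_i e_i`. -/
def rho {n : ℕ} (ν : EuclideanSpace ℝ (Fin n)) (S : Finset (Fin n)) :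
    EuclideanSpace ℝ (Fin n) :=
  WithLp.toLp 2 (fun i => if i ∈ S then ν i else 0)

/-- The unit vector `e_S = ρS / ‖ρS‖`. -/
def unitVec {n : ℕ} (ν : EuclideanSpace ℝ (Fin n)) (S : Finset (Fin n)) :
    EuclideanSpace ℝ (Fin n) :=
  (‖rho ν S‖)⁻¹ • rho ν S

/-- The `S`-local multiplicity of `μ`: `m_S(μ) = ‖E_μ e_S‖²`. -/
def mloc {n : ℕ} (A : Matrix (Fin n) (Fin n) ℝ) (ν : EuclideanSpace ℝ (Fin n))
    (S : Finset (Fin n)) (μ : ℝ) : ℝ :=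
  ‖eigProj A μ (unitVec ν S)‖ ^ 2

/-- The `S`-local spectrum: the set of `μ` whose eigenspace sees `ρS`. -/
def evloc {n : ℕ} (A : Matrix (Fin n) (Fin n) ℝ) (ν : EuclideanSpace ℝ (Fin n))
    (S : Finset (Fin n)) : Set ℝ :=
  {μ | eigProj A μ (rho ν S) ≠ 0}

/-- Distance from a vertex `i` to a set of vertices `S`. -/
def dSet {n : ℕ} (G : SimpleGraph (Fin n)) (S : Finset (Fin n)) (i : Fin n) : ℕ :=
  sInf {k | ∃ j ∈ S, G.dist i j = k}

/-- Eccentricity (covering radius) of a vertex set `S`. -/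
def eccS {n : ℕ} (G : SimpleGraph (Fin n)) (S : Finset (Fin n)) : ℕ :=
  Finset.univ.sup (dSet G S)

/-- The `k`-th subconstituent `S_k = {i : dist(i,S) = k}`. -/
def subcons {n : ℕ} (G : SimpleGraph (Fin n)) (S : Finset (Fin n)) (k : ℕ) :
    Finset (Fin n) :=
  Finset.univ.filter (fun i => dSet G S i = k)

/-- `p(A)·v` for a polynomial `p`, a matrix `A` and a Euclidean vector `v`. -/
def aevalVec {n : ℕ} (A : Matrix (Fin n) (Fin n) ℝ) (p : Polynomial ℝ)
    (v : EuclideanSpace ℝ (Fin n)) : EuclideanSpace ℝ (Fin n) :=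
  WithLp.toLp 2 ((Polynomial.aeval A p).mulVec v)

/-- Moment-like parameter `π_l = ∏_{h≠l} |μ_l − μ_h|` for an enumeration `μ`. -/
def piC {d : ℕ} (μ : Fin (d + 1) → ℝ) (l : Fin (d + 1)) : ℝ :=
  ∏ h ∈ Finset.univ.erase l, |μ l - μ h|

/-!
Let `N_l = ∏_{h ≠ l} (X - μ_h)`. Because `ρC` is the sum of its projections onto the `C`-local
eigenspaces, `N_l(A) ρC = N_l(μ_l) • E_{μ_l} ρC`, and `N_l(μ_l) = (-1)^l π_l` since the `μ_h` are
decreasing. All the `N_l` are monic of degree `d = ε_C`, so `N_l - N_0` has degree `< d`; as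
`(A^k)_{ij} = 0` for `k < dist(i, j)`, such a polynomial in `A` maps `ρC` to a vector vanishing on
`D`. Hence `⟪N_l(A) ρC, ρD⟫` does not depend on `l`. At `l = 0` the local eigenvalue is the Perron
value `λ₀`, whose eigenspace is spanned by `ν` (connectedness), so
`⟪E_{λ₀} ρC, ρD⟫ = ‖ρC‖² ‖ρD‖² / ‖ν‖²`.
-/

open Matrix Function
open scoped RealInnerProductSpace

section Spectral

variable {n : ℕ} {A : Matrix (Fin n) (Fin n) ℝ}

theorem eigProj_mem (κ : ℝ) (v : EuclideanSpace ℝ (Fin n)) : eigProj A κ v ∈ eigSp A κ :=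
  Submodule.coe_mem _

theorem eigProj_eq_self_of_mem {κ : ℝ} {w : EuclideanSpace ℝ (Fin n)} (hw : w ∈ eigSp A κ) :
    eigProj A κ w = w :=
  Submodule.starProjection_eq_self_iff.2 hw

theorem eigProj_smul (κ c : ℝ) (v : EuclideanSpace ℝ (Fin n)) :
    eigProj A κ (c • v) = c • eigProj A κ v := by
  simp only [eigProj, map_smul, Submodule.coe_smul]

theorem inner_eigProj_eigProj (κ : ℝ) (x y : EuclideanSpace ℝ (Fin n)) :
    ⟪eigProj A κ x, eigProj A κ y⟫ = ⟪eigProj A κ x, y⟫ := by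
  rw [eigProj, eigProj, ← Submodule.coe_inner]
  exact Submodule.inner_orthogonalProjectionOnto_eq_of_mem_left _ _

theorem aeval_toEuclideanLin_apply (p : ℝ[X]) (v : EuclideanSpace ℝ (Fin n)) :
    aeval (toEuclideanLin A) p v = WithLp.toLp 2 (aeval A p *ᵥ v.ofLp) :=
  LinearMap.congr_fun (aeval_algHom_apply (toLpLinAlgEquiv (R := ℝ) (n := Fin n) 2).toAlgHom A p) v

variable (hA : (toEuclideanLin A).IsSymmetric)
include hA

theorem eigProj_eq_zero_of_mem_eigSp {κ θ : ℝ} (hne : κ ≠ θ) {w : EuclideanSpace ℝ (Fin n)}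
    (hw : w ∈ eigSp A θ) : eigProj A κ w = 0 := by
  have hw' : w ∈ (eigSp A κ)ᗮ := hA.orthogonalFamily_eigenspaces.isOrtho hne.symm hw
  simp [eigProj, Submodule.orthogonalProjectionOnto_eq_zero_iff.2 hw']

theorem eq_zero_of_forall_eigProj_eq_zero {w : EuclideanSpace ℝ (Fin n)}
    (hw : ∀ κ, eigProj A κ w = 0) : w = 0 := by
  have hmem : w ∈ (⨆ κ, eigSp A κ)ᗮ := by
    rw [← Submodule.iInf_orthogonal, Submodule.mem_iInf]
    exact fun κ => Submodule.orthogonalProjectionOnto_eq_zero_iff.1 (Subtype.ext (hw κ))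
  exact (Submodule.mem_bot ℝ).1 (hA.orthogonalComplement_iSup_eigenspaces_eq_bot ▸ hmem)

theorem sum_eigProj_eq_self {v : EuclideanSpace ℝ (Fin n)} {s : Finset ℝ}
    (hs : ∀ κ ∉ s, eigProj A κ v = 0) : ∑ κ ∈ s, eigProj A κ v = v := by
  refine (sub_eq_zero.1 (eq_zero_of_forall_eigProj_eq_zero hA fun κ => ?_)).symm
  have hdiag : ∀ θ, eigProj A κ (eigProj A θ v) = if θ = κ then eigProj A κ v else 0 := by
    intro θ
    split_ifs with h
    · subst h
      exact eigProj_eq_self_of_mem (eigProj_mem _ _)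
    · exact eigProj_eq_zero_of_mem_eigSp hA (Ne.symm h) (eigProj_mem _ _)
  have hlin : eigProj A κ (v - ∑ θ ∈ s, eigProj A θ v)
      = eigProj A κ v - ∑ θ ∈ s, eigProj A κ (eigProj A θ v) := by
    simp only [eigProj, map_sub, map_sum, Submodule.coe_sub, Submodule.coe_sum]
  rw [hlin, Finset.sum_congr rfl fun θ _ => hdiag θ, Finset.sum_ite_eq']
  split_ifs with h
  · exact sub_self _
  · rw [hs κ h, sub_zero]

theorem aeval_apply_eq_sum_eval_smul_eigProj {v : EuclideanSpace ℝ (Fin n)} {s : Finset ℝ}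
    (hs : ∀ κ ∉ s, eigProj A κ v = 0) (p : ℝ[X]) :
    aeval (toEuclideanLin A) p v = ∑ κ ∈ s, p.eval κ • eigProj A κ v := by
  conv_lhs => rw [← sum_eigProj_eq_self hA hs]
  rw [map_sum]
  exact Finset.sum_congr rfl fun κ _ =>
    Module.End.aeval_apply_of_mem_apply_eq_smul (Module.End.mem_eigenspace_iff.1 (eigProj_mem κ v))

theorem aeval_nodal_erase_apply {ι : Type*} [Fintype ι] [DecidableEq ι] {μ : ι → ℝ}
    (hμ : Injective μ) {v : EuclideanSpace ℝ (Fin n)}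
    (hv : ∀ κ ∉ Set.range μ, eigProj A κ v = 0) (l : ι) :
    aeval (toEuclideanLin A) (Lagrange.nodal (univ.erase l) μ) v
      = (∏ h ∈ univ.erase l, (μ l - μ h)) • eigProj A (μ l) v := by
  have hs : ∀ κ ∉ univ.image μ, eigProj A κ v = 0 := fun κ hκ =>
    hv κ fun ⟨h, hh⟩ => hκ (hh ▸ mem_image_of_mem μ (mem_univ h))
  rw [aeval_apply_eq_sum_eval_smul_eigProj hA hs, Finset.sum_image fun a _ b _ h => hμ h,
    Finset.sum_eq_single l, Lagrange.eval_nodal]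
  · intro h _ hne
    rw [Lagrange.eval_nodal_at_node (mem_erase.2 ⟨hne, mem_univ h⟩), zero_smul]
  · exact fun h => absurd (mem_univ l) h

end Spectral

section Walks

variable {V : Type*} [Fintype V] [DecidableEq V] (G : SimpleGraph V) [DecidableRel G.Adj]
  {R : Type*}

theorem adjMatrix_pow_apply_eq_zero_of_lt_dist [Semiring R] {k : ℕ} {i j : V}
    (hk : k < G.dist i j) : (G.adjMatrix R ^ k) i j = 0 := by
  have hno_walk : IsEmpty {p : G.Walk i j | p.length = k} :=
    ⟨fun ⟨p, hp⟩ => (hp ▸ SimpleGraph.dist_le p).not_gt hk⟩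
  rw [SimpleGraph.adjMatrix_pow_apply_eq_card_walk, Fintype.card_eq_zero, Nat.cast_zero]

theorem aeval_adjMatrix_apply_eq_zero_of_degree_lt [CommSemiring R] {q : R[X]} {i j : V}
    (hq : q.degree < G.dist i j) : aeval (G.adjMatrix R) q i j = 0 := by
  rcases eq_or_ne q 0 with rfl | hq0
  · simp
  rw [aeval_eq_sum_range' ((natDegree_lt_iff_degree_lt hq0).2 hq), Matrix.sum_apply]
  exact Finset.sum_eq_zero fun k hk => by
    rw [Matrix.smul_apply, adjMatrix_pow_apply_eq_zero_of_lt_dist G (mem_range.1 hk), smul_zero]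

end Walks

section WeightedIndicator

variable {n : ℕ} (ν : EuclideanSpace ℝ (Fin n))

theorem rho_apply (S : Finset (Fin n)) (i : Fin n) : rho ν S i = if i ∈ S then ν i else 0 :=
  rfl

theorem ne_zero_of_forall_pos [Nonempty (Fin n)] (hν : ∀ i, 0 < ν i) : ν ≠ 0 :=
  fun h => (hν (Classical.arbitrary _)).ne' (by simp [h])

theorem rho_ne_zero (hν : ∀ i, 0 < ν i) {S : Finset (Fin n)} (hS : S.Nonempty) : rho ν S ≠ 0 := by
  obtain ⟨i, hi⟩ := hS
  intro h
  have := congrArg (· i) h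
  simp only [rho_apply, if_pos hi] at this
  exact (hν i).ne' this

theorem inner_rho_eq_zero {S : Finset (Fin n)} {x : EuclideanSpace ℝ (Fin n)}
    (hx : ∀ i ∈ S, x i = 0) : ⟪x, rho ν S⟫ = 0 := by
  rw [PiLp.inner_apply]
  refine Finset.sum_eq_zero fun i _ => ?_
  by_cases hi : i ∈ S <;> simp [rho_apply, hi, hx]

theorem inner_rho_eq_norm_sq (S : Finset (Fin n)) : ⟪ν, rho ν S⟫ = ‖rho ν S‖ ^ 2 := by
  rw [← real_inner_self_eq_norm_sq, PiLp.inner_apply, PiLp.inner_apply]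
  refine Finset.sum_congr rfl fun i _ => ?_
  by_cases hi : i ∈ S <;> simp [rho_apply, hi]

end WeightedIndicator

section Subconstituents

variable {n : ℕ} (G : SimpleGraph (Fin n)) (C : Finset (Fin n))

theorem dSet_le_dist {i j : Fin n} (hj : j ∈ C) : dSet G C i ≤ G.dist i j :=
  Nat.sInf_le ⟨j, hj, rfl⟩

theorem subcons_eccS_nonempty (hC : C.Nonempty) : (subcons G C (eccS G C)).Nonempty := by
  have : Nonempty (Fin n) := ⟨hC.choose⟩
  obtain ⟨i, -, hi⟩ := Finset.exists_mem_eq_sup univ univ_nonempty (dSet G C)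
  exact ⟨i, mem_filter.2 ⟨mem_univ i, hi.symm⟩⟩

theorem inner_aeval_rho_subcons_eq_zero [DecidableRel G.Adj] (ν : EuclideanSpace ℝ (Fin n))
    {k : ℕ} {q : ℝ[X]} (hq : q.degree < k) :
    ⟪aeval (toEuclideanLin (G.adjMatrix ℝ)) q (rho ν C), rho ν (subcons G C k)⟫ = 0 := by
  refine inner_rho_eq_zero ν fun i hi => ?_
  rw [aeval_toEuclideanLin_apply, PiLp.toLp_apply, Matrix.mulVec, dotProduct]
  refine Finset.sum_eq_zero fun j _ => ?_
  by_cases hj : j ∈ C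
  · have hdist : q.degree < G.dist i j :=
      hq.trans_le (Nat.cast_le.2 ((mem_filter.1 hi).2 ▸ dSet_le_dist G C hj))
    rw [aeval_adjMatrix_apply_eq_zero_of_degree_lt G hdist, zero_mul]
  · simp [rho_apply, hj]

end Subconstituents

section Perron

variable {n : ℕ} {ν w : EuclideanSpace ℝ (Fin n)} {κ lam0 : ℝ}

theorem mem_eigSp_iff {A : Matrix (Fin n) (Fin n) ℝ} :
    w ∈ eigSp A κ ↔ A *ᵥ w.ofLp = κ • w.ofLp := by
  rw [eigSp, Module.End.mem_eigenspace_iff, ← (WithLp.ofLp_injective 2).eq_iff]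
  rfl

theorem le_of_mem_eigSp {A : Matrix (Fin n) (Fin n) ℝ} (hA0 : ∀ i j, 0 ≤ A i j) (hAs : A.IsSymm)
    (hν : ∀ i, 0 < ν i) (hPerron : A *ᵥ ν.ofLp = lam0 • ν.ofLp)
    (hw : w ∈ eigSp A κ) (hw0 : w ≠ 0) : κ ≤ lam0 := by
  set a : Fin n → ℝ := fun i => |w i|
  have hentry : ∀ i, κ * a i ≤ (A *ᵥ a) i := fun i => calc
    κ * a i ≤ |κ * w i| := by
        rw [abs_mul]; exact mul_le_mul_of_nonneg_right (le_abs_self κ) (abs_nonneg _)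
    _ = |∑ j, A i j * w j| := by
        rw [← smul_eq_mul, ← Pi.smul_apply, ← mem_eigSp_iff.1 hw]; rfl
    _ ≤ ∑ j, |A i j * w j| := abs_sum_le_sum_abs _ _
    _ = (A *ᵥ a) i := by simp only [mulVec, dotProduct, abs_mul, abs_of_nonneg (hA0 i _), a]
  have hpos : 0 < ν.ofLp ⬝ᵥ a := by
    obtain ⟨i, hi⟩ : ∃ i, w i ≠ 0 := by
      by_contra! h
      exact hw0 (PiLp.ext h)
    exact sum_pos' (fun j _ => mul_nonneg (hν j).le (abs_nonneg _))
      ⟨i, mem_univ i, mul_pos (hν i) (abs_pos.2 hi)⟩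
  refine le_of_mul_le_mul_right ?_ hpos
  calc κ * (ν.ofLp ⬝ᵥ a) = ν.ofLp ⬝ᵥ (κ • a) := by rw [dotProduct_smul, smul_eq_mul]
    _ ≤ ν.ofLp ⬝ᵥ (A *ᵥ a) :=
        sum_le_sum fun i _ => mul_le_mul_of_nonneg_left (hentry i) (hν i).le
    _ = (A *ᵥ ν.ofLp) ⬝ᵥ a := by rw [dotProduct_mulVec, ← mulVec_transpose, hAs.eq]
    _ = lam0 * (ν.ofLp ⬝ᵥ a) := by rw [hPerron, smul_dotProduct, smul_eq_mul]

variable (G : SimpleGraph (Fin n)) [DecidableRel G.Adj]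

theorem adjMatrix_nonneg (i j : Fin n) : 0 ≤ G.adjMatrix ℝ i j := by
  rw [SimpleGraph.adjMatrix_apply]
  split_ifs <;> norm_num

theorem eq_zero_of_nonneg_of_mem_eigSp_adjMatrix (hconn : G.Connected)
    {u : EuclideanSpace ℝ (Fin n)} (hu0 : ∀ i, 0 ≤ u i) (hu : u ∈ eigSp (G.adjMatrix ℝ) κ)
    {i₀ : Fin n} (hi₀ : u i₀ = 0) : u = 0 := by
  have hstep : ∀ {i j}, G.Adj i j → u i = 0 → u j = 0 := by
    intro i j hij hi
    have hsum : ∑ k, G.adjMatrix ℝ i k * u k = 0 := by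
      have := congrFun (mem_eigSp_iff.1 hu) i
      rw [mulVec, dotProduct] at this
      rw [this, Pi.smul_apply, hi, smul_zero]
    have := (sum_eq_zero_iff_of_nonneg fun k _ => mul_nonneg (adjMatrix_nonneg G i k) (hu0 k)).1
      hsum j (mem_univ j)
    simpa [SimpleGraph.adjMatrix_apply, hij] using this
  have hwalk : ∀ {i j} (p : G.Walk i j), u i = 0 → u j = 0 := by
    intro i j p
    induction p with
    | nil => exact id
    | cons hadj _ ih => exact fun h => ih (hstep hadj h)
  exact PiLp.ext fun j => hwalk (hconn.preconnected i₀ j).some hi₀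

theorem eigSp_adjMatrix_eq_span (hconn : G.Connected) (hν : ∀ i, 0 < ν i)
    (hPerron : G.adjMatrix ℝ *ᵥ ν.ofLp = lam0 • ν.ofLp) :
    eigSp (G.adjMatrix ℝ) lam0 = ℝ ∙ ν := by
  refine le_antisymm (fun w hw => ?_)
    ((Submodule.span_singleton_le_iff_mem _ _).2 (mem_eigSp_iff.2 hPerron))
  have := hconn.nonempty
  obtain ⟨i₀, -, hmax⟩ := exists_max_image univ (fun i => w i / ν i) univ_nonempty
  set t := w i₀ / ν i₀
  -- `t • ν - w` is a nonnegative eigenvector vanishing at `i₀`.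
  have hu : t • ν - w = 0 := by
    refine eq_zero_of_nonneg_of_mem_eigSp_adjMatrix G hconn (fun i => ?_)
      (sub_mem (Submodule.smul_mem _ t (mem_eigSp_iff.2 hPerron)) hw) (i₀ := i₀) ?_
    · simpa [sub_nonneg] using (div_le_iff₀ (hν i)).1 (hmax i (mem_univ i))
    · simp [t, div_mul_cancel₀ _ (hν i₀).ne']
  exact Submodule.mem_span_singleton.2 ⟨t, sub_eq_zero.1 hu⟩

theorem eigProj_adjMatrix_perron (hconn : G.Connected) (hν : ∀ i, 0 < ν i)
    (hPerron : G.adjMatrix ℝ *ᵥ ν.ofLp = lam0 • ν.ofLp) (x : EuclideanSpace ℝ (Fin n)) :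
    eigProj (G.adjMatrix ℝ) lam0 x = (⟪ν, x⟫ / ‖ν‖ ^ 2) • ν := by
  rw [eigProj, ← Submodule.starProjection_apply]
  simp only [eigSp_adjMatrix_eq_span G hconn hν hPerron, Submodule.starProjection_singleton]
  rfl

theorem eigProj_adjMatrix_perron_rho (hconn : G.Connected) (hν : ∀ i, 0 < ν i)
    (hPerron : G.adjMatrix ℝ *ᵥ ν.ofLp = lam0 • ν.ofLp) (C : Finset (Fin n)) :
    eigProj (G.adjMatrix ℝ) lam0 (rho ν C) = (‖rho ν C‖ ^ 2 / ‖ν‖ ^ 2) • ν := by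
  rw [eigProj_adjMatrix_perron G hconn hν hPerron, inner_rho_eq_norm_sq]

end Perron

section Nodes

variable {d : ℕ} {μ : Fin (d + 1) → ℝ}

theorem piC_pos (hμ : Injective μ) (l : Fin (d + 1)) : 0 < piC μ l :=
  prod_pos fun _ hh => abs_pos.2 (sub_ne_zero.2 (hμ.ne (ne_of_mem_erase hh).symm))

theorem prod_erase_sub_eq_neg_one_pow_mul_piC (hμ : StrictAnti μ) (l : Fin (d + 1)) :
    ∏ h ∈ univ.erase l, (μ l - μ h) = (-1) ^ (l : ℕ) * piC μ l := by
  have hsign : ∀ h ∈ univ.erase l, μ l - μ h = (if h < l then -1 else 1) * |μ l - μ h| := by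
    intro h hh
    rcases (ne_of_mem_erase hh).lt_or_gt with hlt | hgt
    · rw [if_pos hlt, abs_of_neg (sub_neg.2 (hμ hlt)), neg_one_mul, neg_neg]
    · rw [if_neg hgt.not_gt, abs_of_pos (sub_pos.2 (hμ hgt)), one_mul]
  have hbelow : (univ.erase l).filter (· < l) = Iio l := by
    ext h
    simp only [mem_filter, mem_erase, mem_univ, mem_Iio, and_true, and_iff_right_iff_imp]
    exact ne_of_lt
  rw [prod_congr rfl hsign, prod_mul_distrib, prod_ite, prod_const, prod_const, one_pow, mul_one,
    hbelow, Fin.card_Iio, piC]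

theorem degree_nodal_erase (l : Fin (d + 1)) : (Lagrange.nodal (univ.erase l) μ).degree = d := by
  rw [Lagrange.degree_nodal, card_erase_of_mem (mem_univ l), card_univ, Fintype.card_fin,
    Nat.add_sub_cancel]

theorem degree_nodal_erase_sub_lt (l l' : Fin (d + 1)) :
    (Lagrange.nodal (univ.erase l) μ - Lagrange.nodal (univ.erase l') μ).degree < d := by
  have h := degree_sub_lt_left (p := Lagrange.nodal (univ.erase l) μ)
    (q := Lagrange.nodal (univ.erase l') μ) (by rw [degree_nodal_erase, degree_nodal_erase])
    Lagrange.nodal_monic.ne_zero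
    (by rw [Lagrange.nodal_monic.leadingCoeff, Lagrange.nodal_monic.leadingCoeff])
  rwa [degree_nodal_erase] at h

end Nodes

section LocalSpectrum

variable {n : ℕ} (G : SimpleGraph (Fin n)) [DecidableRel G.Adj] (hconn : G.Connected)
  {ν : EuclideanSpace ℝ (Fin n)} (hν : ∀ i, 0 < ν i) {lam0 : ℝ}
  (hPerron : G.adjMatrix ℝ *ᵥ ν.ofLp = lam0 • ν.ofLp) {C : Finset (Fin n)} (hC : C.Nonempty)
  {d : ℕ} {μ : Fin (d + 1) → ℝ} (hμa : StrictAnti μ)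
  (hμr : Set.range μ = evloc (G.adjMatrix ℝ) ν C)
include hconn hν hPerron hC hμa hμr

theorem apply_zero_eq_perron : μ 0 = lam0 := by
  have := hconn.nonempty
  have hν0 := ne_zero_of_forall_pos ν hν
  have hlam0 : lam0 ∈ Set.range μ := by
    rw [hμr]
    change eigProj _ lam0 _ ≠ 0
    rw [eigProj_adjMatrix_perron_rho G hconn hν hPerron C]
    refine smul_ne_zero (div_ne_zero ?_ ?_) hν0 <;> refine pow_ne_zero 2 (norm_ne_zero_iff.2 ?_)
    exacts [rho_ne_zero ν hν hC, hν0]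
  obtain ⟨k, hk⟩ := hlam0
  have h0 : eigProj (G.adjMatrix ℝ) (μ 0) (rho ν C) ≠ 0 :=
    (hμr ▸ Set.mem_range_self 0 : μ 0 ∈ evloc (G.adjMatrix ℝ) ν C)
  exact le_antisymm
    (le_of_mem_eigSp (adjMatrix_nonneg G) G.isSymm_adjMatrix hν hPerron (eigProj_mem _ _) h0)
    (hk ▸ hμa.antitone (Fin.zero_le k))

theorem inner_eigProj_rho_subcons (l : Fin (d + 1)) :
    ⟪eigProj (G.adjMatrix ℝ) (μ l) (rho ν C), rho ν (subcons G C d)⟫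
      = (-1) ^ (l : ℕ) * (piC μ 0 / piC μ l)
          * (‖rho ν C‖ ^ 2 * ‖rho ν (subcons G C d)‖ ^ 2 / ‖ν‖ ^ 2) := by
  set A := G.adjMatrix ℝ
  have hsym : (toEuclideanLin A).IsSymmetric :=
    isSymmetric_toEuclideanLin_iff.2 (isHermitian_iff_isSymm.2 G.isSymm_adjMatrix)
  have hout : ∀ κ ∉ Set.range μ, eigProj A κ (rho ν C) = 0 := fun κ hκ => by
    rw [hμr] at hκ
    simpa [evloc] using hκ
  have hnodal : ∀ h, aeval (toEuclideanLin A) (Lagrange.nodal (univ.erase h) μ) (rho ν C)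
      = ((-1) ^ (h : ℕ) * piC μ h) • eigProj A (μ h) (rho ν C) := fun h => by
    rw [aeval_nodal_erase_apply hsym hμa.injective hout, prod_erase_sub_eq_neg_one_pow_mul_piC hμa]
  have hcancel := inner_aeval_rho_subcons_eq_zero G C ν (degree_nodal_erase_sub_lt (μ := μ) l 0)
  rw [map_sub, LinearMap.sub_apply, inner_sub_left, sub_eq_zero, hnodal, hnodal,
    real_inner_smul_left, real_inner_smul_left] at hcancel
  rw [apply_zero_eq_perron G hconn hν hPerron hC hμa hμr,
    eigProj_adjMatrix_perron_rho G hconn hν hPerron C, real_inner_smul_left, inner_rho_eq_norm_sq,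
    Fin.val_zero, pow_zero, one_mul] at hcancel
  have hsign_sq : ((-1 : ℝ) ^ (l : ℕ)) ^ 2 = 1 := by rw [← pow_mul, pow_mul', neg_one_sq, one_pow]
  have hπ := (piC_pos hμa.injective l).ne'
  field_simp
  linear_combination (-1 : ℝ) ^ (l : ℕ) * hcancel
    - piC μ l * ⟪eigProj A (μ l) (rho ν C), rho ν (subcons G C d)⟫ * hsign_sq

end LocalSpectrum

theorem inner_product_projections_general {n : ℕ} (G : SimpleGraph (Fin n)) [DecidableRel G.Adj]
    (hconn : G.Connected)
    (ν : EuclideanSpace ℝ (Fin n)) (hν : ∀ i, 0 < ν i) (lam0 : ℝ)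
    (hPerron : (G.adjMatrix ℝ).mulVec ν = lam0 • ν)
    (C : Finset (Fin n)) (hC : C.Nonempty)
    (d : ℕ) (μ : Fin (d + 1) → ℝ) (hμa : StrictAnti μ)
    (hμr : Set.range μ = evloc (G.adjMatrix ℝ) ν C)
    (hext : eccS G C = d) :
    ∀ l : Fin (d + 1),
      (inner ℝ (eigProj (G.adjMatrix ℝ) (μ l) (unitVec ν C))
             (eigProj (G.adjMatrix ℝ) (μ l) (unitVec ν (subcons G C (eccS G C)))) : ℝ)
        = (-1 : ℝ) ^ (l : ℕ) * (piC μ 0 / piC μ l) *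
            (‖rho ν C‖ * ‖rho ν (subcons G C (eccS G C))‖ / ‖ν‖ ^ 2) ∧
      (inner ℝ (eigProj (G.adjMatrix ℝ) (μ l) (unitVec ν C))
             (eigProj (G.adjMatrix ℝ) (μ l) (unitVec ν (subcons G C (eccS G C)))) : ℝ) ≠ 0 := by
  intro l
  have hD := subcons_eccS_nonempty G C hC
  rw [hext] at hD ⊢
  have hρC := norm_ne_zero_iff.2 (rho_ne_zero ν hν hC)
  have hρD := norm_ne_zero_iff.2 (rho_ne_zero ν hν hD)
  have := hconn.nonempty
  have hν0 := norm_ne_zero_iff.2 (ne_zero_of_forall_pos ν hν)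
  have hformula : ⟪eigProj (G.adjMatrix ℝ) (μ l) (unitVec ν C),
      eigProj (G.adjMatrix ℝ) (μ l) (unitVec ν (subcons G C d))⟫
        = (-1 : ℝ) ^ (l : ℕ) * (piC μ 0 / piC μ l) *
            (‖rho ν C‖ * ‖rho ν (subcons G C d)‖ / ‖ν‖ ^ 2) := by
    rw [unitVec, unitVec, eigProj_smul, eigProj_smul, real_inner_smul_left, real_inner_smul_right,
      inner_eigProj_eigProj, inner_eigProj_rho_subcons G hconn hν hPerron hC hμa hμr]
    field_simp
  refine ⟨hformula, hformula ▸ mul_ne_zero (mul_ne_zero ?_ ?_) ?_⟩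
  · exact pow_ne_zero _ (neg_ne_zero.2 one_ne_zero)
  · exact div_ne_zero (piC_pos hμa.injective 0).ne' (piC_pos hμa.injective l).ne'
  · exact div_ne_zero (mul_ne_zero hρC hρD) (pow_ne_zero 2 hν0)

theorem inner_product_projections {n : ℕ} (hn : 0 < n) (G : SimpleGraph (Fin n)) [DecidableRel G.Adj]
    (hconn : G.Connected)
    (ν : EuclideanSpace ℝ (Fin n)) (hν : ∀ i, 0 < ν i) (lam0 : ℝ)
    (hPerron : (G.adjMatrix ℝ).mulVec ν = lam0 • ν)
    (C : Finset (Fin n)) (hC : C.Nonempty)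
    (d : ℕ) (μ : Fin (d + 1) → ℝ) (hμa : StrictAnti μ)
    (hμr : Set.range μ = evloc (G.adjMatrix ℝ) ν C)
    (hext : eccS G C = d) :
    ∀ l : Fin (d + 1),
      (inner ℝ (eigProj (G.adjMatrix ℝ) (μ l) (unitVec ν C))
             (eigProj (G.adjMatrix ℝ) (μ l) (unitVec ν (subcons G C (eccS G C)))) : ℝ)
        = (-1 : ℝ) ^ (l : ℕ) * (piC μ 0 / piC μ l) *
            (‖rho ν C‖ * ‖rho ν (subcons G C (eccS G C))‖ / ‖ν‖ ^ 2) ∧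
      (inner ℝ (eigProj (G.adjMatrix ℝ) (μ l) (unitVec ν C))
             (eigProj (G.adjMatrix ℝ) (μ l) (unitVec ν (subcons G C (eccS G C)))) : ℝ) ≠ 0 :=
  inner_product_projections_general G hconn ν hν lam0 hPerron C hC d μ hμa hμr hext
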